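/- There exist constants C ≥ c > 0 such that for every even N ≥ 4 the following holds for the Ehrenfest urn chain (X_t) with parameter N. Start the chain at X_0 ∈ {1, N−1} and let T = min{t ≥ 1 : X_t ∈ {1, N−1}}. Then, conditioned on the event that X_1 ∈ {2,…,N−2}, the conditional expectation of T satisfies c·2^N/N ≤ E[T | X_1 ∈ {2,…,N−2}] ≤ C·2^N/N. -/

import Mathlib

set_option linter.unusedSectionVars false

open scoped ENNReal

attribute [local instance] Classical.propDecidable

noncomputable section

namespace DGC

/-! ### Markov chains and expected hitting times -/

/-- `survive K A t s` is the probability that the Markov chain with transition kernel `K`,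
started at `s`, has not visited the set `A` within its first `t` steps
(time `0` counts: if `s ∈ A` the chain has hit `A` at time `0`). -/
def survive {S : Type*} (K : S → PMF S) (A : Set S) : ℕ → S → ℝ≥0∞
  | 0, s => if s ∈ A then 0 else 1
  | (t + 1), s => if s ∈ A then 0 else ∑' s', K s s' * survive K A t s'

/-- The expected hitting time of the set `A` for the Markov chain with kernel `K`
started at `s`; it equals `∑_{t ≥ 0} Pr[T > t]` where `T = min {t : X_t ∈ A}`, and it is `∞`
if `A` is reached with probability less than one. -/
def expectedHitting {S : Type*} (K : S → PMF S) (A : Set S) (s : S) : ℝ≥0∞ :=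
  ∑' t, survive K A t s

/-- `log⁺ T = max {1, ln T}`. -/
def logPlus (T : ℕ) : ℝ := max 1 (Real.log T)

variable {V : Type*} [Fintype V] [DecidableEq V]

/-! ### Colorings, conflicts -/

/-- A coloring (a map `V → ℕ`, colors being `1,2,3,…`) is proper if no edge is monochromatic. -/
def IsProper (G : SimpleGraph V) (c : V → ℕ) : Prop :=
  ∀ u v, G.Adj u v → c u ≠ c v

/-- The set of conflicting edges of the coloring `c`. -/
def conflictSet (G : SimpleGraph V) (c : V → ℕ) : Set (Sym2 V) :=
  {e | e ∈ G.edgeSet ∧ ∃ u v, e = s(u, v) ∧ c u = c v}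

/-- The number of conflicting edges of the coloring `c`. -/
def numConflicts (G : SimpleGraph V) (c : V → ℕ) : ℕ :=
  (conflictSet G c).ncard

/-- The set of proper 2-colorings (with color set `{1,2}`). -/
def properTwoColorings (G : SimpleGraph V) : Set (V → ℕ) :=
  {c | IsProper G c ∧ ∀ v, c v = 1 ∨ c v = 2}

/-- Vertices that are an endpoint of some conflicting edge. -/
def conflictVerts (G : SimpleGraph V) (c : V → ℕ) : Finset V :=
  Finset.univ.filter fun v => ∃ u, G.Adj v u ∧ c v = c u

/-! ### RLS and the (1+1) EA with `k = 2` colors (palette `{1,2}`) -/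

/-- Recolor vertex `v` with the unique other color of the palette `{1,2}`. -/
def flip (c : V → ℕ) (v : V) : V → ℕ := Function.update c v (3 - c v)

/-- One iteration of RLS with `k = 2` colors: choose a vertex `v` uniformly at random,
recolor it with the other color, and accept iff the number of conflicting edges
does not increase. -/
def rls2 (G : SimpleGraph V) (c : V → ℕ) : PMF (V → ℕ) :=
  if h : Nonempty V then
    (@PMF.uniformOfFintype V _ h).map fun v =>
      if numConflicts G (flip c v) ≤ numConflicts G c then flip c v else c
  else PMF.pure c

/-- Independent Bernoulli choices along a list of vertices. -/
def flipsAux (p : V → ℝ≥0∞) (h : ∀ v, p v ≤ 1) : List V → PMF (V → Bool)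
  | [] => PMF.pure fun _ => false
  | v :: vs =>
      (PMF.bernoulli (p v).toNNReal
        (le_of_le_of_eq (ENNReal.toNNReal_mono ENNReal.one_ne_top (h v)) ENNReal.toNNReal_one)).bind fun b =>
        (flipsAux p h vs).map fun g => Function.update g v b

/-- A random subset of the vertices (as an indicator function), where each vertex `v` is
included independently with probability `p v`. -/
def flips (p : V → ℝ≥0∞) (h : ∀ v, p v ≤ 1) : PMF (V → Bool) :=
  flipsAux p h Finset.univ.toList

/-- `1/|V|` (or `0` for the empty graph). -/
def invCard (V : Type*) [Fintype V] : ℝ≥0∞ :=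
  if 0 < Fintype.card V then (Fintype.card V : ℝ≥0∞)⁻¹ else 0

lemma invCard_le_one : invCard V ≤ 1 := by
  unfold invCard
  split
  · rw [ENNReal.inv_le_one]
    exact_mod_cast ‹0 < Fintype.card V›
  · exact zero_le_one

lemma half_le_one : (1 / 2 : ℝ≥0∞) ≤ 1 := by
  rw [ENNReal.div_le_iff (by norm_num) (by norm_num)]
  norm_num

/-- Recolor (within the palette `{1,2}`) exactly the vertices selected by `bs`. -/
def mutate2 (c : V → ℕ) (bs : V → Bool) : V → ℕ := fun v => if bs v then 3 - c v else c v

/-- One iteration of the (1+1) EA with `k = 2` colors: every vertex is independently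
recolored with probability `1/n`, and the offspring is accepted iff its number of
conflicting edges is not larger. -/
def ea2 (G : SimpleGraph V) (c : V → ℕ) : PMF (V → ℕ) :=
  (flips (fun _ => invCard V) (fun _ => invCard_le_one)).map fun bs =>
    if numConflicts G (mutate2 c bs) ≤ numConflicts G c then mutate2 c bs else c

/-- One iteration of the tailored (1+1) EA with `k = 2` colors: every endpoint of a
conflicting edge is independently recolored with probability `1/2`, every other vertex with
probability `1/n`; the offspring is accepted iff its number of conflicting edges is
not larger. -/
def tailoredEA2 (G : SimpleGraph V) (c : V → ℕ) : PMF (V → ℕ) :=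
  (flips (fun v => if v ∈ conflictVerts G c then 1 / 2 else invCard V)
      (fun v => by split; exacts [half_le_one, invCard_le_one])).map fun bs =>
    if numConflicts G (mutate2 c bs) ≤ numConflicts G c then mutate2 c bs else c

/-- One iteration of the tailored RLS with `k = 2` colors: with probability `1/2` a vertex is
chosen uniformly at random among the endpoints of conflicting edges (if any exist), otherwise
uniformly at random among all vertices; it is recolored with the other color, and the move
is accepted iff the number of conflicting edges does not increase. -/
def tailoredRls2 (G : SimpleGraph V) (c : V → ℕ) : PMF (V → ℕ) :=
  if hV : Nonempty V then
    (PMF.bernoulli (1 / 2 : ℝ≥0∞).toNNReal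
      (le_of_le_of_eq (ENNReal.toNNReal_mono ENNReal.one_ne_top half_le_one) ENNReal.toNNReal_one)).bind fun coin =>
      (if h : coin = true ∧ (conflictVerts G c).Nonempty
        then PMF.uniformOfFinset (conflictVerts G c) h.2
        else @PMF.uniformOfFintype V _ hV).map fun v =>
        if numConflicts G (flip c v) ≤ numConflicts G c then flip c v else c
  else PMF.pure c

/-! ### Grundy colorings and Grundy local search -/

/-- The smallest color (from `{1,2,3,…}`) not used by any neighbor of `v`. -/
def smallestFree (G : SimpleGraph V) (c : V → ℕ) (v : V) : ℕ :=
  sInf {i | 1 ≤ i ∧ ∀ u, G.Adj v u → c u ≠ i}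

/-- A coloring is a Grundy coloring iff every vertex has the smallest color not used by any
of its neighbors (equivalently: it is proper, and every vertex `v` has, for every color
`i < c v`, an `i`-colored neighbor). -/
def IsGrundy (G : SimpleGraph V) (c : V → ℕ) : Prop :=
  ∀ v, c v = smallestFree G c v

/-- One step of Grundy local search: some vertex whose color is not the smallest color absent
from its neighborhood is recolored with the smallest color not used by any of its neighbors. -/
def glsStep (G : SimpleGraph V) (c c' : V → ℕ) : Prop :=
  ∃ v, c v ≠ smallestFree G c v ∧ c' = Function.update c v (smallestFree G c v)

/-- `glsRun G c c'` holds iff `c'` is a possible outcome of a (maximal) run of Grundy local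
search started at `c`: it is reachable from `c` by Grundy local search steps and is a
Grundy coloring. -/
def glsRun (G : SimpleGraph V) (c c' : V → ℕ) : Prop :=
  Relation.ReflTransGen (glsStep G) c c' ∧ IsGrundy G c'

/-- The Grundy number of `G`: the largest color used by any Grundy coloring of `G`. -/
def grundyNumber (G : SimpleGraph V) : ℕ :=
  sSup {k | ∃ c v, IsGrundy G c ∧ c v = k}

/-! ### Kempe chains, color eliminations, and iterated local search -/

/-- The restriction of `G` to the vertex set `S` (an induced subgraph on the same
vertex type). -/
def restrict (G : SimpleGraph V) (S : Set V) : SimpleGraph V where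
  Adj u w := G.Adj u w ∧ u ∈ S ∧ w ∈ S
  symm := by constructor; intro u w h; exact ⟨h.1.symm, h.2.2, h.2.1⟩
  loopless := by constructor; intro u h; exact G.irrefl h.1

/-- `H_j(v)`: the connected component containing `v` of the subgraph of `G` induced by the
vertices colored `c v` or `j`. -/
def kempeSet (G : SimpleGraph V) (c : V → ℕ) (v : V) (j : ℕ) : Set V :=
  {u | (restrict G {w | c w = c v ∨ c w = j}).Reachable v u}

/-- The Kempe chain operation `(v, j)`: swap the colors `c v` and `j` on all vertices of
`H_j(v)`. -/
def kempeSwap (G : SimpleGraph V) (c : V → ℕ) (v : V) (j : ℕ) : V → ℕ := fun u =>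
  if u ∈ kempeSet G c v j then
    if c u = c v then j else if c u = j then c v else c u
  else c u

/-- The union `H_j(v₁) ∪ … ∪ H_j(v_ℓ)` over all `i`-colored neighbors `v₁, …, v_ℓ` of `v`. -/
def ceSet (G : SimpleGraph V) (c : V → ℕ) (v : V) (i j : ℕ) : Set V :=
  {u | ∃ w, G.Adj v w ∧ c w = i ∧ (restrict G {x | c x = i ∨ c x = j}).Reachable w u}

/-- The color elimination at `v` with colors `i, j`: swap colors `i` and `j` on
`H_j(v₁) ∪ … ∪ H_j(v_ℓ)`, where `v₁, …, v_ℓ` are the `i`-colored neighbors of `v`. -/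
def ceSwap (G : SimpleGraph V) (c : V → ℕ) (v : V) (i j : ℕ) : V → ℕ := fun u =>
  if u ∈ ceSet G c v i j then
    if c u = i then j else if c u = j then i else c u
  else c u

/-- `n_i(c)`: the number of `i`-colored vertices of the coloring `c`. -/
def colorCount (c : V → ℕ) (i : ℕ) : ℕ := (Finset.univ.filter fun v => c v = i).card

/-- The selection order `x ⪰ y`: `x` has fewer conflicting edges than `y`, or equally many
and the color frequencies satisfy `n_i(x) = n_i(y)` for all `i`, or `n_i(x) < n_i(y)` for the
largest index `i` with `n_i(x) ≠ n_i(y)`. -/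
def Pref (G : SimpleGraph V) (x y : V → ℕ) : Prop :=
  numConflicts G x < numConflicts G y ∨
    (numConflicts G x = numConflicts G y ∧
      ((∀ i, colorCount x i = colorCount y i) ∨
        ∃ i, colorCount x i < colorCount y i ∧ ∀ k, i < k → colorCount x k = colorCount y k))

/-- One iteration of ILS with Kempe chains, where `gls` is the (arbitrary, but fixed) rule
producing the outcome of a run of Grundy local search: choose `v` uniformly at random and
`j ∈ {1, …, deg(v) + 1}` uniformly at random, apply the Kempe chain operation `(v, j)`,
apply Grundy local search, and accept the result `z` iff `z ⪰ x`. -/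
def ilsKempe (G : SimpleGraph V) (gls : (V → ℕ) → (V → ℕ)) (x : V → ℕ) :
    PMF (V → ℕ) :=
  if hV : Nonempty V then
    (@PMF.uniformOfFintype V _ hV).bind fun v =>
      (PMF.uniformOfFinset (Finset.Icc 1 (G.degree v + 1))
          ⟨1, by simp only [Finset.mem_Icc]; omega⟩).map fun j =>
        let z := gls (kempeSwap G x v j)
        if Pref G z x then z else x
  else PMF.pure x

/-- The pairs of distinct colors `i ≠ j` with `i, j ∈ {1, …, c v − 1}`. -/
def cePairs (x : V → ℕ) (v : V) : Finset (ℕ × ℕ) :=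
  ((Finset.Icc 1 (x v - 1)) ×ˢ (Finset.Icc 1 (x v - 1))).filter fun p => p.1 ≠ p.2

lemma cePairs_nonempty {x : V → ℕ} {v : V} (h : 3 ≤ x v) : (cePairs x v).Nonempty :=
  ⟨(1, 2), by simp only [cePairs, Finset.mem_filter, Finset.mem_product, Finset.mem_Icc]; omega⟩

/-- One iteration of ILS with color eliminations, where `gls` is the (arbitrary, but fixed)
rule producing the outcome of a run of Grundy local search: choose `v` uniformly at random;
if `c v ≥ 3`, choose distinct `i, j ∈ {1, …, c v − 1}` uniformly at random and apply the
corresponding color elimination; apply Grundy local search, and accept the result `z`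
iff `z ⪰ x`. -/
def ilsCE (G : SimpleGraph V) (gls : (V → ℕ) → (V → ℕ)) (x : V → ℕ) :
    PMF (V → ℕ) :=
  if hV : Nonempty V then
    (@PMF.uniformOfFintype V _ hV).bind fun v =>
      if h : 3 ≤ x v then
        (PMF.uniformOfFinset (cePairs x v) (cePairs_nonempty h)).map fun p =>
          let z := gls (ceSwap G x v p.1 p.2)
          if Pref G z x then z else x
      else PMF.pure x
  else PMF.pure x


/-- The Ehrenfest urn chain with parameter `N` on the states `{0, 1, …, N}`: from state `x`
it moves to `x + 1` with probability `(N − x)/N` and to `x − 1` with probability `x/N`. -/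
def ehrenfest (N : ℕ) (x : Fin (N + 1)) : PMF (Fin (N + 1)) :=
  (PMF.bernoulli ((((N - x.val : ℕ) : ℝ≥0∞) / (N : ℝ≥0∞)).toNNReal)
      (le_of_le_of_eq (ENNReal.toNNReal_mono ENNReal.one_ne_top (ENNReal.div_le_of_le_mul (by
        rw [one_mul]; exact_mod_cast Nat.sub_le N x.val))) ENNReal.toNNReal_one)).map fun b =>
    if b then (⟨min (x.val + 1) N, by omega⟩ : Fin (N + 1))
    else (⟨x.val - 1, by have := x.isLt; omega⟩ : Fin (N + 1))


/-! ### Auxiliary development for Statement 12 -/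

section Stmt12Aux

lemma survive_of_mem {S : Type*} (K : S → PMF S) {A : Set S} {s : S} (hs : s ∈ A) :
    ∀ t, survive K A t s = 0 := by
  intro t; cases t <;> simp [survive, hs]

lemma survive_zero' {S : Type*} (K : S → PMF S) {A : Set S} {s : S} (hs : s ∉ A) :
    survive K A 0 s = 1 := by simp [survive, hs]

lemma survive_succ' {S : Type*} (K : S → PMF S) {A : Set S} {s : S} (hs : s ∉ A) (t : ℕ) :
    survive K A (t + 1) s = ∑' s', K s s' * survive K A t s' := by
  simp [survive, hs]

lemma sum_survive_succ {S : Type*} (K : S → PMF S) {A : Set S} {s : S} (hs : s ∉ A) (n : ℕ) :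
    ∑ t ∈ Finset.range (n + 1), survive K A t s
      = 1 + ∑' s', K s s' * ∑ t ∈ Finset.range n, survive K A t s' := by
  rw [Finset.sum_range_succ', survive_zero' K hs, add_comm]
  congr 1
  calc ∑ t ∈ Finset.range n, survive K A (t + 1) s
      = ∑ t ∈ Finset.range n, ∑' s', K s s' * survive K A t s' :=
        Finset.sum_congr rfl fun t _ => survive_succ' K hs t
    _ = ∑' s', ∑ t ∈ Finset.range n, K s s' * survive K A t s' :=
        (Summable.tsum_finsetSum fun _ _ => ENNReal.summable).symm
    _ = ∑' s', K s s' * ∑ t ∈ Finset.range n, survive K A t s' :=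
        tsum_congr fun s' => (Finset.mul_sum _ _ _).symm

lemma expectedHitting_le_of_super {S : Type*} (K : S → PMF S) (A : Set S) (h : S → ℝ≥0∞)
    (hh : ∀ s ∉ A, 1 + ∑' s', K s s' * h s' ≤ h s) (s : S) :
    expectedHitting K A s ≤ h s := by
  have key : ∀ n s, ∑ t ∈ Finset.range n, survive K A t s ≤ h s := by
    intro n
    induction n with
    | zero => intro s; simp
    | succ n ih =>
      intro s
      by_cases hs : s ∈ A
      · simp [survive_of_mem K hs]
      · rw [sum_survive_succ K hs]
        refine le_trans ?_ (hh s hs)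
        refine add_le_add_right (Summable.tsum_le_tsum (fun s' => ?_) ENNReal.summable ENNReal.summable) 1
        exact mul_le_mul_right (ih s') _
  rw [expectedHitting, ENNReal.tsum_eq_iSup_nat]
  exact iSup_le fun n => key n s

lemma le_expectedHitting_of_sub {S : Type*} (K : S → PMF S) (A : Set S) (g : S → ℝ≥0∞)
    (M : ℝ≥0∞) (hM : M ≠ ⊤) (hgM : ∀ s, g s ≤ M) (hg0 : ∀ s ∈ A, g s = 0)
    (hg : ∀ s ∉ A, g s ≤ 1 + ∑' s', K s s' * g s') (s : S)
    (hfin : expectedHitting K A s ≠ ⊤) :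
    g s ≤ expectedHitting K A s := by
  have key : ∀ n s, g s ≤ (∑ t ∈ Finset.range (n + 1), survive K A t s)
      + M * survive K A n s := by
    intro n
    induction n with
    | zero =>
      intro s
      by_cases hs : s ∈ A
      · simp [hg0 s hs]
      · simp only [zero_add, Finset.sum_range_one, survive_zero' K hs, mul_one]
        calc g s ≤ M := hgM s
          _ ≤ 1 + M := self_le_add_left M 1
    | succ n ih =>
      intro s
      by_cases hs : s ∈ A
      · simp [hg0 s hs]
      · calc g s ≤ 1 + ∑' s', K s s' * g s' := hg s hs
          _ ≤ 1 + ∑' s', K s s' * ((∑ t ∈ Finset.range (n + 1), survive K A t s')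
                + M * survive K A n s') := by
              refine add_le_add_right (Summable.tsum_le_tsum (fun s' => ?_) ENNReal.summable
                ENNReal.summable) 1
              exact mul_le_mul_right (ih s') _
          _ = 1 + ((∑' s', K s s' * ∑ t ∈ Finset.range (n + 1), survive K A t s')
                + ∑' s', K s s' * (M * survive K A n s')) := by
              rw [← ENNReal.tsum_add]
              exact congrArg (1 + ·) (tsum_congr fun s' => mul_add _ _ _)
          _ = (1 + ∑' s', K s s' * ∑ t ∈ Finset.range (n + 1), survive K A t s')
                + M * ∑' s', K s s' * survive K A n s' := by
              rw [add_assoc]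
              congr 1
              congr 1
              rw [← ENNReal.tsum_mul_left]
              exact tsum_congr fun s' => mul_left_comm _ _ _
          _ = (∑ t ∈ Finset.range (n + 1 + 1), survive K A t s)
                + M * survive K A (n + 1) s := by
              rw [sum_survive_succ K hs (n + 1), survive_succ' K hs n]
  rw [expectedHitting] at hfin ⊢
  have hto : Filter.Tendsto (fun n => survive K A n s) Filter.atTop (nhds 0) :=
    ENNReal.tendsto_atTop_zero_of_tsum_ne_top hfin
  have hlim : Filter.Tendsto (fun n => (∑' t, survive K A t s) + M * survive K A n s)
      Filter.atTop (nhds ((∑' t, survive K A t s) + M * 0)) :=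
    Filter.Tendsto.const_add _ (ENNReal.Tendsto.const_mul hto (Or.inr hM))
  rw [mul_zero, add_zero] at hlim
  refine ge_of_tendsto' hlim fun n => ?_
  calc g s ≤ (∑ t ∈ Finset.range (n + 1), survive K A t s) + M * survive K A n s := key n s
    _ ≤ (∑' t, survive K A t s) + M * survive K A n s := by
        exact add_le_add_left (ENNReal.sum_le_tsum _) _

lemma tsum_map_mul {S T : Type*} (P : PMF S) (f : S → T) (g : T → ℝ≥0∞) :
    ∑' t, (P.map f) t * g t = ∑' s, P s * g (f s) := by
  simp only [PMF.map_apply]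
  calc ∑' t, (∑' s, if t = f s then P s else 0) * g t
      = ∑' t, ∑' s, (if t = f s then P s else 0) * g t :=
        tsum_congr fun t => ENNReal.tsum_mul_right.symm
    _ = ∑' s, ∑' t, (if t = f s then P s else 0) * g t := ENNReal.tsum_comm
    _ = ∑' s, P s * g (f s) := by
        refine tsum_congr fun s => ?_
        rw [tsum_eq_single (f s) (fun t' ht' => by simp [ht'])]
        simp

lemma ehrenfest_tsum (N : ℕ) (hN : 0 < N) (x : Fin (N + 1)) (g : ℕ → ℝ≥0∞) :
    ∑' s', ehrenfest N x s' * g s'.val =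
      ((N - x.val : ℕ) : ℝ≥0∞) / (N : ℝ≥0∞) * g (min (x.val + 1) N)
        + (x.val : ℝ≥0∞) / (N : ℝ≥0∞) * g (x.val - 1) := by
  have hp : ((N - x.val : ℕ) : ℝ≥0∞) / (N : ℝ≥0∞) ≠ ⊤ :=
    (ENNReal.div_lt_top (ENNReal.natCast_ne_top _) (by exact_mod_cast hN.ne')).ne
  have hq : (x.val : ℝ≥0∞) / (N : ℝ≥0∞) + ((N - x.val : ℕ) : ℝ≥0∞) / (N : ℝ≥0∞) = 1 := by
    rw [ENNReal.div_add_div_same,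
      show (x.val : ℝ≥0∞) + ((N - x.val : ℕ) : ℝ≥0∞) = (N : ℝ≥0∞) by
        have hlt := x.isLt
        rw [← Nat.cast_add]; exact Nat.cast_inj.mpr (by omega)]
    exact ENNReal.div_self (by exact_mod_cast hN.ne') (by simp)
  have h1 : (1 : ℝ≥0∞) - ((N - x.val : ℕ) : ℝ≥0∞) / (N : ℝ≥0∞)
      = (x.val : ℝ≥0∞) / (N : ℝ≥0∞) := (ENNReal.eq_sub_of_add_eq hp hq).symm
  rw [ehrenfest, tsum_map_mul, tsum_bool]
  simp only [PMF.bernoulli_apply, Bool.cond_false, Bool.cond_true, if_true, if_false,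
    Bool.false_eq_true]
  rw [ENNReal.coe_sub, ENNReal.coe_one, ENNReal.coe_toNNReal hp]
  rw [h1, add_comm]

/-! #### The explicit solution for the Ehrenfest hitting problem -/

/-- Twice the tail mass of the binomial coefficients, folded at `N/2`. -/
def sig (N j : ℕ) : ℕ := 2 * ∑ k ∈ Finset.Ico j (N / 2), N.choose k + N.choose (N / 2)

/-- The expected passage time from `j` to `j - 1` for the folded Ehrenfest chain. -/
def tau (N j : ℕ) : ℝ≥0∞ :=
  ((N * sig N j : ℕ) : ℝ≥0∞) / ((2 * j * N.choose j : ℕ) : ℝ≥0∞)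

/-- The expected hitting time of `1` from `m` for the folded Ehrenfest chain. -/
def vv (N m : ℕ) : ℝ≥0∞ := ∑ j ∈ Finset.Icc 2 m, tau N j

/-- The expected hitting time of `{1, N-1}` for the Ehrenfest chain, as a function on `ℕ`. -/
def ggn (N x : ℕ) : ℝ≥0∞ := if x = 0 ∨ x = N then 1 else vv N (min x (N - x))

lemma tau_ne_top {N j : ℕ} (hj : 1 ≤ j) (hjN : j ≤ N) : tau N j ≠ ⊤ := by
  refine (ENNReal.div_lt_top (ENNReal.natCast_ne_top _) ?_).ne
  have : 0 < 2 * j * N.choose j := by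
    have := Nat.choose_pos hjN
    positivity
  exact_mod_cast this.ne'

lemma vv_ne_top {N m : ℕ} (hm : m ≤ N) : vv N m ≠ ⊤ := by
  rw [vv, ENNReal.sum_ne_top]
  intro j hj
  rw [Finset.mem_Icc] at hj
  exact tau_ne_top (by omega) (by omega)

lemma vv_one (N : ℕ) : vv N 1 = 0 := by
  rw [vv, Finset.Icc_eq_empty (by omega), Finset.sum_empty]

lemma vv_two (N : ℕ) : vv N 2 = tau N 2 := by
  rw [vv, Finset.Icc_self, Finset.sum_singleton]

lemma vv_succ (N m : ℕ) (hm : 1 ≤ m) : vv N (m + 1) = vv N m + tau N (m + 1) := by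
  rw [vv, vv, ← Finset.insert_Icc_right_eq_Icc_add_one (by omega), Finset.sum_insert (by simp)]
  ring

lemma vv_mono {N m m' : ℕ} (h : m ≤ m') : vv N m ≤ vv N m' :=
  Finset.sum_le_sum_of_subset (Finset.Icc_subset_Icc_right h)

lemma tau_top (N : ℕ) (hNe : Even N) (hN : 2 ≤ N) : tau N (N / 2) = 1 := by
  have h2M : 2 * (N / 2) = N := by
    obtain ⟨r, rfl⟩ := hNe; omega
  have hC : 0 < N.choose (N / 2) := Nat.choose_pos (by omega)
  rw [tau, sig, Finset.Ico_self, Finset.sum_empty, mul_zero, zero_add]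
  rw [show 2 * (N / 2) * N.choose (N / 2) = N * N.choose (N / 2) by rw [h2M]]
  exact ENNReal.div_self (by positivity) (by finiteness)

lemma tau_step (N m : ℕ) (hm : 2 ≤ m) (hmN : m + 1 ≤ N / 2) :
    (m : ℝ≥0∞) * tau N m = (N : ℝ≥0∞) + ((N - m : ℕ) : ℝ≥0∞) * tau N (m + 1) := by
  have hmN' : m < N := by omega
  have hC : 0 < N.choose m := Nat.choose_pos (by omega)
  have hC' : 0 < 2 * N.choose m := by omega
  -- left side
  have hA : (m : ℝ≥0∞) * tau N m
      = ((N * sig N m : ℕ) : ℝ≥0∞) / ((2 * N.choose m : ℕ) : ℝ≥0∞) := by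
    rw [tau, ← mul_div_assoc,
      show ((2 * m * N.choose m : ℕ) : ℝ≥0∞) = (m : ℝ≥0∞) * ((2 * N.choose m : ℕ) : ℝ≥0∞) by
        push_cast; ring,
      show (m : ℝ≥0∞) * ((N * sig N m : ℕ) : ℝ≥0∞)
          = (m : ℝ≥0∞) * ((N * sig N m : ℕ) : ℝ≥0∞) from rfl]
    exact ENNReal.mul_div_mul_left _ _ (by exact_mod_cast (by omega : m ≠ 0)) (by simp)
  -- right side
  have hden : 2 * (m + 1) * N.choose (m + 1) = (N - m) * (2 * N.choose m) := by
    have h := Nat.choose_succ_right_eq N m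
    calc 2 * (m + 1) * N.choose (m + 1) = 2 * (N.choose (m + 1) * (m + 1)) := by ring
      _ = 2 * (N.choose m * (N - m)) := by rw [h]
      _ = (N - m) * (2 * N.choose m) := by ring
  have hB : ((N - m : ℕ) : ℝ≥0∞) * tau N (m + 1)
      = ((N * sig N (m + 1) : ℕ) : ℝ≥0∞) / ((2 * N.choose m : ℕ) : ℝ≥0∞) := by
    rw [tau, ← mul_div_assoc, hden,
      show (((N - m) * (2 * N.choose m) : ℕ) : ℝ≥0∞)
          = ((N - m : ℕ) : ℝ≥0∞) * ((2 * N.choose m : ℕ) : ℝ≥0∞) by push_cast; ring]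
    exact ENNReal.mul_div_mul_left _ _ (by exact_mod_cast (by omega : N - m ≠ 0)) (by simp)
  -- numerator recursion
  have hsig : sig N m = 2 * N.choose m + sig N (m + 1) := by
    rw [sig, sig, Finset.sum_eq_sum_Ico_succ_bot (by omega : m < N / 2)]
    ring
  rw [hA, hB, hsig,
    show ((N * (2 * N.choose m + sig N (m + 1)) : ℕ) : ℝ≥0∞)
        = ((N * (2 * N.choose m) : ℕ) : ℝ≥0∞) + ((N * sig N (m + 1) : ℕ) : ℝ≥0∞) by
      push_cast; ring,
    ENNReal.add_div]
  congr 1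
  rw [show ((N * (2 * N.choose m) : ℕ) : ℝ≥0∞)
      = (N : ℝ≥0∞) * ((2 * N.choose m : ℕ) : ℝ≥0∞) by push_cast; ring,
    mul_div_assoc, ENNReal.div_self (by exact_mod_cast hC'.ne') (by finiteness), mul_one]

lemma vv_core (N m : ℕ) (hm : 2 ≤ m) (hmN : m + 1 ≤ N / 2) :
    (N : ℝ≥0∞) * vv N m
      = (N : ℝ≥0∞) + (((N - m : ℕ) : ℝ≥0∞) * vv N (m + 1) + (m : ℝ≥0∞) * vv N (m - 1)) := by
  have h1 : vv N m = vv N (m - 1) + tau N m := by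
    have h := vv_succ N (m - 1) (by omega)
    rwa [show m - 1 + 1 = m by omega] at h
  have h2 : vv N (m + 1) = vv N (m - 1) + tau N m + tau N (m + 1) := by
    rw [vv_succ N m (by omega), h1]
  have hab : ((N - m : ℕ) : ℝ≥0∞) + (m : ℝ≥0∞) = (N : ℝ≥0∞) := by
    rw [← Nat.cast_add]; exact Nat.cast_inj.mpr (by omega)
  have key := tau_step N m hm hmN
  set a := ((N - m : ℕ) : ℝ≥0∞) with ha
  set v := vv N (m - 1) with hv
  set t := tau N m with ht
  set t' := tau N (m + 1) with ht'
  rw [h1, h2, ← hab]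
  calc (a + (m : ℝ≥0∞)) * (v + t)
      = a * v + a * t + v * (m : ℝ≥0∞) + (m : ℝ≥0∞) * t := by ring
    _ = a * v + a * t + v * (m : ℝ≥0∞) + ((N : ℝ≥0∞) + a * t') := by rw [key]
    _ = (N : ℝ≥0∞) + (a * (v + t + t') + (m : ℝ≥0∞) * v) := by ring
    _ = (a + (m : ℝ≥0∞)) + (a * (v + t + t') + (m : ℝ≥0∞) * v) := by rw [hab]

lemma ggn_eq (N : ℕ) (hN : 4 ≤ N) (hNe : Even N) (x : ℕ) (hx : x ≤ N)
    (hx1 : x ≠ 1) (hxN : x ≠ N - 1) :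
    (N : ℝ≥0∞) * ggn N x
      = (N : ℝ≥0∞) + (((N - x : ℕ) : ℝ≥0∞) * ggn N (min (x + 1) N)
          + (x : ℝ≥0∞) * ggn N (x - 1)) := by
  have h2M : 2 * (N / 2) = N := by obtain ⟨r, rfl⟩ := hNe; omega
  have hM2 : 2 ≤ N / 2 := by omega
  rcases eq_or_ne x 0 with hx0 | hx0
  · rw [hx0]
    rw [show min (0 + 1) N = 1 by omega, show (0 : ℕ) - 1 = 0 from rfl]
    rw [show ggn N 0 = 1 by rw [ggn, if_pos (Or.inl rfl)],
      show ggn N 1 = 0 by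
        rw [ggn, if_neg (by omega), show min 1 (N - 1) = 1 by omega, vv_one]]
    simp
  rcases eq_or_ne x N with hxe | hxN'
  · rw [hxe]
    rw [show min (N + 1) N = N by omega, show (N - N : ℕ) = 0 by omega]
    rw [show ggn N N = 1 by rw [ggn, if_pos (Or.inr rfl)],
      show ggn N (N - 1) = 0 by
        rw [ggn, if_neg (by omega), show min (N - 1) (N - (N - 1)) = 1 by omega, vv_one]]
    simp
  -- now 2 ≤ x ≤ N - 2
  have hx2 : 2 ≤ x := by omega
  have hxN2 : x ≤ N - 2 := by omega
  rw [show min (x + 1) N = x + 1 by omega]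
  rw [ggn, if_neg (by omega), ggn, if_neg (by omega), ggn, if_neg (by omega)]
  rcases lt_trichotomy x (N / 2) with hlt | heq | hgt
  · -- x < N/2
    rw [show min x (N - x) = x by omega, show min (x + 1) (N - (x + 1)) = x + 1 by omega,
      show min (x - 1) (N - (x - 1)) = x - 1 by omega]
    exact vv_core N x hx2 (by omega)
  · -- x = N/2
    rw [show min x (N - x) = x by omega,
      show min (x + 1) (N - (x + 1)) = x - 1 by omega,
      show min (x - 1) (N - (x - 1)) = x - 1 by omega]
    have h1 : vv N x = vv N (x - 1) + 1 := by
      have h := vv_succ N (x - 1) (by omega)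
      rw [show x - 1 + 1 = x by omega] at h
      rw [h, show x = N / 2 from heq, tau_top N hNe (by omega)]
    have hab : ((N - x : ℕ) : ℝ≥0∞) + (x : ℝ≥0∞) = (N : ℝ≥0∞) := by
      rw [← Nat.cast_add]; exact Nat.cast_inj.mpr (by omega)
    rw [h1, ← hab]
    ring
  · -- x > N/2
    have hm2 : 2 ≤ N - x := by omega
    have hmN : N - x + 1 ≤ N / 2 := by omega
    rw [show min x (N - x) = N - x by omega,
      show min (x + 1) (N - (x + 1)) = N - x - 1 by omega,
      show min (x - 1) (N - (x - 1)) = N - x + 1 by omega]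
    have key := vv_core N (N - x) hm2 hmN
    rw [show ((N - (N - x) : ℕ) : ℝ≥0∞) = (x : ℝ≥0∞) from
        Nat.cast_inj.mpr (by omega), show ((N - x : ℕ) : ℝ≥0∞) = ((N - x : ℕ) : ℝ≥0∞) from rfl,
      show N - x - 1 = N - x - 1 from rfl] at key
    rw [show (N - x + 1 : ℕ) = N - x + 1 from rfl]
    calc (N : ℝ≥0∞) * vv N (N - x)
        = (N : ℝ≥0∞) + ((x : ℝ≥0∞) * vv N (N - x + 1)
            + ((N - x : ℕ) : ℝ≥0∞) * vv N (N - x - 1)) := key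
      _ = (N : ℝ≥0∞) + (((N - x : ℕ) : ℝ≥0∞) * vv N (N - x - 1)
            + (x : ℝ≥0∞) * vv N (N - x + 1)) := by ring

lemma div_combine {g nn a u b d : ℝ≥0∞} (hn0 : nn ≠ 0) (hnt : nn ≠ ⊤)
    (h : nn * g = nn + (a * u + b * d)) : g = 1 + (a / nn * u + b / nn * d) := by
  have hg : g = (nn + (a * u + b * d)) / nn := (ENNReal.eq_div_iff hn0 hnt).mpr h
  rw [hg, ENNReal.add_div, ENNReal.add_div, ENNReal.div_self hn0 hnt]
  congr 1
  congr 1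
  · simp only [div_eq_mul_inv]; ring
  · simp only [div_eq_mul_inv]; ring

lemma gg_fixed (N : ℕ) (hN : 4 ≤ N) (hNe : Even N) (x : Fin (N + 1))
    (hx : ¬(x.val = 1 ∨ x.val = N - 1)) :
    ggn N x.val = 1 + ∑' s', ehrenfest N x s' * ggn N s'.val := by
  push_neg at hx
  rw [ehrenfest_tsum N (by omega) x (ggn N)]
  exact div_combine (nn := (N : ℝ≥0∞)) (by exact_mod_cast (by omega : N ≠ 0)) (by simp)
    (ggn_eq N hN hNe x.val (by omega) hx.1 hx.2)

lemma ggn_le (N : ℕ) (x : ℕ) : ggn N x ≤ 1 + vv N (N / 2) := by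
  rw [ggn]
  split
  · exact le_add_right le_rfl
  · exact le_add_left (vv_mono (by omega))

lemma reflect_sum (M : ℕ) :
    ∑ k ∈ Finset.Ico (M + 1) (2 * M + 1), (2 * M).choose k
      = ∑ k ∈ Finset.Ico 0 M, (2 * M).choose k := by
  rw [Finset.sum_Ico_eq_sum_range, Finset.sum_Ico_eq_sum_range,
    show 2 * M + 1 - (M + 1) = M by omega, show M - 0 = M by omega,
    ← Finset.sum_range_reflect]
  refine Finset.sum_congr rfl fun i hi => ?_
  rw [Finset.mem_range] at hi
  rw [show M + 1 + (M - 1 - i) = 2 * M - i by omega, show 0 + i = i from by omega]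
  exact Nat.choose_symm (by omega)

lemma sig_two (N : ℕ) (hN : 4 ≤ N) (hNe : Even N) : sig N 2 + (2 + 2 * N) = 2 ^ N := by
  obtain ⟨M, hM'⟩ : ∃ M, N = 2 * M := by obtain ⟨r, hr⟩ := hNe; exact ⟨r, by omega⟩
  subst hM'
  have hM : 2 ≤ M := by omega
  have hhalf : 2 * M / 2 = M := by omega
  have htot : ∑ k ∈ Finset.range (2 * M + 1), (2 * M).choose k = 2 ^ (2 * M) :=
    Nat.sum_range_choose (2 * M)
  have hsplit : ∑ k ∈ Finset.Ico 0 M, (2 * M).choose k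
      + ∑ k ∈ Finset.Ico M (2 * M + 1), (2 * M).choose k = 2 ^ (2 * M) := by
    rw [Finset.sum_Ico_consecutive _ (by omega) (by omega), ← Finset.range_eq_Ico]
    exact htot
  have hmid : ∑ k ∈ Finset.Ico M (2 * M + 1), (2 * M).choose k
      = (2 * M).choose M + ∑ k ∈ Finset.Ico (M + 1) (2 * M + 1), (2 * M).choose k :=
    Finset.sum_eq_sum_Ico_succ_bot (by omega) _
  have hlow : ∑ k ∈ Finset.Ico 0 M, (2 * M).choose k
      = 1 + (2 * M + ∑ k ∈ Finset.Ico 2 M, (2 * M).choose k) := by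
    rw [Finset.sum_eq_sum_Ico_succ_bot (by omega : 0 < M),
      Finset.sum_eq_sum_Ico_succ_bot (by omega : 1 < M), Nat.choose_zero_right,
      Nat.choose_one_right]
  have hrefl := reflect_sum M
  rw [sig, hhalf]
  omega

lemma tau_two_val (N : ℕ) (hN : 4 ≤ N) (hNe : Even N) :
    1 + tau N 2 = ((2 ^ N - 4 : ℕ) : ℝ≥0∞) / ((2 * (N - 1) : ℕ) : ℝ≥0∞) := by
  have hS := sig_two N hN hNe
  have hden : 2 * 2 * N.choose 2 = N * (2 * (N - 1)) := by
    have h2 : N.choose 2 * 2 = N * (N - 1) := by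
      rw [Nat.choose_two_right]
      exact Nat.div_mul_cancel (hNe.two_dvd.mul_right _)
    calc 2 * 2 * N.choose 2 = 2 * (N.choose 2 * 2) := by ring
      _ = 2 * (N * (N - 1)) := by rw [h2]
      _ = N * (2 * (N - 1)) := by ring
  have htau : tau N 2 = ((sig N 2 : ℕ) : ℝ≥0∞) / ((2 * (N - 1) : ℕ) : ℝ≥0∞) := by
    rw [tau, hden,
      show ((N * (2 * (N - 1)) : ℕ) : ℝ≥0∞)
          = (N : ℝ≥0∞) * ((2 * (N - 1) : ℕ) : ℝ≥0∞) by push_cast; ring,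
      show ((N * sig N 2 : ℕ) : ℝ≥0∞) = (N : ℝ≥0∞) * ((sig N 2 : ℕ) : ℝ≥0∞) by
        push_cast; ring]
    exact ENNReal.mul_div_mul_left _ _ (by exact_mod_cast (by omega : N ≠ 0)) (by simp)
  have hd0 : ((2 * (N - 1) : ℕ) : ℝ≥0∞) ≠ 0 := by exact_mod_cast (by omega : 2 * (N - 1) ≠ 0)
  rw [htau, show (1 : ℝ≥0∞) = ((2 * (N - 1) : ℕ) : ℝ≥0∞) / ((2 * (N - 1) : ℕ) : ℝ≥0∞) from
      (ENNReal.div_self hd0 (ENNReal.natCast_ne_top _)).symm, ENNReal.div_add_div_same,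
    show ((2 * (N - 1) : ℕ) : ℝ≥0∞) + ((sig N 2 : ℕ) : ℝ≥0∞)
        = ((2 ^ N - 4 : ℕ) : ℝ≥0∞) by
      rw [← Nat.cast_add]
      exact Nat.cast_inj.mpr (by omega)]

lemma nat_div_le_div {a b c d : ℕ} (hb : b ≠ 0) (hd : d ≠ 0) (h : a * d ≤ c * b) :
    (a : ℝ≥0∞) / (b : ℝ≥0∞) ≤ (c : ℝ≥0∞) / (d : ℝ≥0∞) := by
  have h1 : (a : ℝ≥0∞) / (b : ℝ≥0∞) = ((d * a : ℕ) : ℝ≥0∞) / ((d * b : ℕ) : ℝ≥0∞) := by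
    push_cast
    rw [ENNReal.mul_div_mul_left _ _ (by exact_mod_cast hd) (by simp)]
  have h2 : (c : ℝ≥0∞) / (d : ℝ≥0∞) = ((b * c : ℕ) : ℝ≥0∞) / ((b * d : ℕ) : ℝ≥0∞) := by
    push_cast
    rw [ENNReal.mul_div_mul_left _ _ (by exact_mod_cast hb) (by simp)]
  rw [h1, h2, show b * d = d * b from Nat.mul_comm b d]
  refine ENNReal.div_le_div_right ?_ _
  have h' : d * a ≤ b * c := by
    rw [Nat.mul_comm d a, Nat.mul_comm b c]; exact h
  exact_mod_cast h'

lemma hitting_eq (N : ℕ) (hN : 4 ≤ N) (hNe : Even N) (z : Fin (N + 1))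
    (hz : min z.val (N - z.val) = 2) :
    expectedHitting (ehrenfest N) {s : Fin (N + 1) | s.val = 1 ∨ s.val = N - 1} z
      = tau N 2 := by
  set A : Set (Fin (N + 1)) := {s : Fin (N + 1) | s.val = 1 ∨ s.val = N - 1} with hA
  have hmem : ∀ s : Fin (N + 1), s ∈ A ↔ (s.val = 1 ∨ s.val = N - 1) := fun s => Iff.rfl
  have hfix : ∀ s : Fin (N + 1), s ∉ A →
      1 + ∑' s', ehrenfest N s s' * ggn N s'.val = ggn N s.val := by
    intro s hs
    exact (gg_fixed N hN hNe s (by rwa [hmem] at hs)).symm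
  have hub := expectedHitting_le_of_super (ehrenfest N) A (fun s => ggn N s.val)
    (fun s hs => (hfix s hs).le) z
  have hzA : z ∉ A := by rw [hmem]; omega
  have hzval : ggn N z.val = tau N 2 := by
    rw [ggn, if_neg (by omega), hz, vv_two]
  have htop : tau N 2 ≠ ⊤ := tau_ne_top (by omega) (by omega)
  have hfin : expectedHitting (ehrenfest N) A z ≠ ⊤ := by
    refine ne_top_of_le_ne_top ?_ hub
    show ggn N z.val ≠ ⊤
    rw [hzval]; exact htop
  have hlb := le_expectedHitting_of_sub (ehrenfest N) A (fun s => ggn N s.val)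
    (1 + vv N (N / 2)) (by
      have : vv N (N / 2) ≠ ⊤ := vv_ne_top (by omega)
      simp [this, ENNReal.add_ne_top])
    (fun s => ggn_le N s.val)
    (fun s hs => by
      rw [hmem] at hs
      show ggn N s.val = 0
      rw [ggn]
      rcases hs with h1 | h1
      · rw [h1, if_neg (by omega), show min 1 (N - 1) = 1 by omega, vv_one]
      · rw [h1, if_neg (by omega), show min (N - 1) (N - (N - 1)) = 1 by omega, vv_one])
    (fun s hs => (hfix s hs).ge) z hfin
  refine le_antisymm (by simpa [hzval] using hub) ?_
  simpa [hzval] using hlb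

end Stmt12Aux

/-- There are constants `C ≥ c > 0` such that for every even `N ≥ 4` the
following holds for the Ehrenfest urn chain with parameter `N` started at `X₀ ∈ {1, N−1}`,
with `T = min {t ≥ 1 : X_t ∈ {1, N−1}}`: conditioned on `X₁ ∈ {2, …, N−2}`, the conditional
expectation of `T` satisfies `c·2^N/N ≤ E[T ∣ X₁ ∈ {2, …, N−2}] ≤ C·2^N/N`.

(By the Markov property, conditioned on `X₁ ∈ {2, …, N−2}` — i.e. on the first step moving
inward, to `2` if `X₀ = 1` and to `N−2` if `X₀ = N−1` — the conditional expectation of `T`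
equals `1` plus the expected hitting time of `{1, N−1}` from that inward neighbor, which is
how it is expressed here.) -/
theorem stmt12 :
    ∃ C c : ℝ≥0∞, 0 < c ∧ c ≤ C ∧ C ≠ ⊤ ∧
      ∀ (N : ℕ) (hN : 4 ≤ N) (hNeven : Even N)
        (x0 : Fin (N + 1)) (hx0 : x0.val = 1 ∨ x0.val = N - 1),
        c * 2 ^ N / (N : ℝ≥0∞) ≤
            1 + expectedHitting (ehrenfest N) {s : Fin (N + 1) | s.val = 1 ∨ s.val = N - 1}
              (⟨if x0.val = 1 then 2 else N - 2, by split <;> omega⟩ : Fin (N + 1)) ∧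
        1 + expectedHitting (ehrenfest N) {s : Fin (N + 1) | s.val = 1 ∨ s.val = N - 1}
              (⟨if x0.val = 1 then 2 else N - 2, by split <;> omega⟩ : Fin (N + 1)) ≤
            C * 2 ^ N / (N : ℝ≥0∞) := by
  refine ⟨1, 4⁻¹, ?_, ?_, by simp, ?_⟩
  · simp [ENNReal.inv_pos]
  · rw [ENNReal.inv_le_one]
    exact one_le_two.trans (by norm_num)
  intro N hN hNeven x0 hx0
  have main : ∀ z : Fin (N + 1), min z.val (N - z.val) = 2 →
      (4⁻¹ * 2 ^ N / (N : ℝ≥0∞) ≤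
          1 + expectedHitting (ehrenfest N) {s : Fin (N + 1) | s.val = 1 ∨ s.val = N - 1} z ∧
        1 + expectedHitting (ehrenfest N) {s : Fin (N + 1) | s.val = 1 ∨ s.val = N - 1} z ≤
          1 * 2 ^ N / (N : ℝ≥0∞)) := by
    intro z hz
    rw [hitting_eq N hN hNeven z hz, tau_two_val N hN hNeven]
    have h16 : 16 ≤ 2 ^ N := by
      calc (16 : ℕ) = 2 ^ 4 := by norm_num
        _ ≤ 2 ^ N := Nat.pow_le_pow_right (by norm_num) hN
    constructor
    · have hLHS : 4⁻¹ * 2 ^ N / (N : ℝ≥0∞) = ((2 ^ N : ℕ) : ℝ≥0∞) / ((4 * N : ℕ) : ℝ≥0∞) := by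
        push_cast
        rw [div_eq_mul_inv, div_eq_mul_inv,
          ENNReal.mul_inv (Or.inl (by norm_num)) (Or.inl (by norm_num))]
        ring
      rw [hLHS]
      refine nat_div_le_div (by positivity) (by omega) ?_
      obtain ⟨T, hT⟩ : ∃ T, 2 ^ N - 4 = T := ⟨_, rfl⟩
      obtain ⟨n1, hn1⟩ : ∃ n1, N - 1 = n1 := ⟨_, rfl⟩
      rw [hT, hn1, show 2 ^ N = T + 4 by omega, show N = n1 + 1 by omega]
      nlinarith [mul_le_mul_left (show (4 : ℕ) ≤ T by omega) n1]
    · have hRHS : 1 * 2 ^ N / (N : ℝ≥0∞) = ((2 ^ N : ℕ) : ℝ≥0∞) / ((N : ℕ) : ℝ≥0∞) := by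
        push_cast; rw [one_mul]
      rw [hRHS]
      refine nat_div_le_div (by omega) (by omega) ?_
      obtain ⟨T, hT⟩ : ∃ T, 2 ^ N - 4 = T := ⟨_, rfl⟩
      obtain ⟨n1, hn1⟩ : ∃ n1, N - 1 = n1 := ⟨_, rfl⟩
      rw [hT, hn1, show 2 ^ N = T + 4 by omega, show N = n1 + 1 by omega]
      nlinarith [mul_le_mul_right (show (1 : ℕ) ≤ n1 by omega) T]
  exact main _ (by dsimp only; split <;> omega)
end DGC
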